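/- arXiv:2508.04555 — 2 statements merged into one kernel-verified Lean document; each statement's English description precedes it below -/
import Mathlib

section
/- Let C be a pure d-dimensional simplicial complex and F a face of C. Then F is a shedding face of C (i.e., the deletion del_F(C) is pure of dimension d) if and only if for every element f of F and every facet H of C containing F, there exists a facet H' of C with H ∩ H' = H \ {f} (i.e., H' is adjacent to H and omits f). -/
open Finset

variable {V : Type*} [DecidableEq V]

/-- A simplicial complex: a finite collection of finite faces closed under subsets. -/
def IsComplex (C : Finset (Finset V)) : Prop :=
  ∀ F ∈ C, ∀ G, G ⊆ F → G ∈ C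

/-- `F` is a facet (maximal face) of `C`. -/
def IsFacet (C : Finset (Finset V)) (F : Finset V) : Prop :=
  F ∈ C ∧ ∀ G ∈ C, F ⊆ G → F = G

/-- `C` is pure of dimension `d`: all facets have cardinality `d+1`. -/
def IsPure (C : Finset (Finset V)) (d : ℕ) : Prop :=
  ∀ F, IsFacet C F → F.card = d + 1

/-- The deletion of a face `F`: all faces not containing `F`. -/
def del (C : Finset (Finset V)) (F : Finset V) : Finset (Finset V) :=
  C.filter (fun G => ¬ F ⊆ G)

/-- The link of a face `F`. -/
def lk (C : Finset (Finset V)) (F : Finset V) : Finset (Finset V) :=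
  C.filter (fun G => G ∩ F = ∅ ∧ G ∪ F ∈ C)

/-- The simplicial complex generated by a collection of faces. -/
def gen (S : Finset (Finset V)) : Finset (Finset V) :=
  S.biUnion Finset.powerset

/-- `C` is a (full) simplex. -/
def IsSimplexCx (C : Finset (Finset V)) : Prop :=
  ∃ F : Finset V, C = F.powerset

/-- `F` is a shedding face of the pure `d`-dimensional complex `C`. -/
def Shedding (C : Finset (Finset V)) (d : ℕ) (F : Finset V) : Prop :=
  F ∈ C ∧ IsPure (del C F) d

/-- `k`-decomposability (Provan–Billera): a simplex, or there is a shedding face `F`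
with `dim F ≤ k` whose deletion and link are again `k`-decomposable. -/
inductive Decomp : ℕ → Finset (Finset V) → Prop
  | simplex (k : ℕ) (C : Finset (Finset V)) : IsSimplexCx C → Decomp k C
  | shed (k : ℕ) (C : Finset (Finset V)) (F : Finset V) (d : ℕ) :
      F ∈ C → F.Nonempty → F.card ≤ k + 1 → IsPure C d → IsPure (del C F) d →
      Decomp k (del C F) → Decomp k (lk C F) → Decomp k C

/-- The 1-dimensional skeleton of a complex, as a simple graph. -/
def skel (C : Finset (Finset V)) : SimpleGraph V where
  Adj x y := x ≠ y ∧ ({x, y} : Finset V) ∈ C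
  symm := ⟨by
    rintro x y ⟨hxy, hm⟩
    exact ⟨hxy.symm, by rwa [Finset.pair_comm]⟩⟩
  loopless := ⟨fun x h => h.1 rfl⟩

/-- A shelling of a pure `d`-dimensional complex: an ordering of the facets such that
each facet meets the union of the previous ones in a pure `(d-1)`-dimensional complex. -/
def IsShelling (C : Finset (Finset V)) (d : ℕ) (L : List (Finset V)) : Prop :=
  L.Nodup ∧ (∀ F, IsFacet C F ↔ F ∈ L) ∧
  ∀ i : ℕ, 1 ≤ i → ∀ h : i < L.length,
    IsPure (gen (L.take i).toFinset ∩ (L.get ⟨i, h⟩).powerset) (d - 1)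

open scoped Classical in
/-- `full^d(G)`: the pure `d`-dimensional complex generated by all `(d+1)`-cliques of `G`. -/
noncomputable def fullC [Fintype V] (d : ℕ) (G : SimpleGraph V) : Finset (Finset V) :=
  gen ((Finset.univ.powerset).filter fun s => G.IsClique (↑s : Set V) ∧ s.card = d + 1)

open scoped Classical in
/-- All `(d+1)`-cliques of `G` containing the set `e`. -/
noncomputable def cliquesWith [Fintype V] (d : ℕ) (G : SimpleGraph V) (e : Finset V) :
    Finset (Finset V) :=
  (Finset.univ.powerset).filter fun s => G.IsClique (↑s : Set V) ∧ s.card = d + 1 ∧ e ⊆ s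

/-- `G^H`: join every vertex of `H` to every other vertex. -/
def coneGraph (G : SimpleGraph V) (H : Finset V) : SimpleGraph V where
  Adj x y := x ≠ y ∧ (G.Adj x y ∨ x ∈ H ∨ y ∈ H)
  symm := ⟨by
    rintro x y ⟨hxy, h⟩
    refine ⟨hxy.symm, ?_⟩
    rcases h with h | h | h
    · exact Or.inl (G.adj_symm h)
    · exact Or.inr (Or.inr h)
    · exact Or.inr (Or.inl h)⟩
  loopless := ⟨fun x h => h.1 rfl⟩

/-- The graph `G` together with the extra edge `ab`. -/
def addEdge (G : SimpleGraph V) (a b : V) : SimpleGraph V :=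
  G ⊔ SimpleGraph.fromEdgeSet {s(a, b)}

/-- `C` is fully coned with respect to `H`: every vertex of `H` is adjacent to every other
vertex of `skel C`, and every `(d+1)`-clique of `skel C` is a facet of `C`. -/
def FullyConed (C : Finset (Finset V)) (d : ℕ) (H : Finset V) : Prop :=
  (∀ h ∈ H, ∀ v : V, ({v} : Finset V) ∈ C → v ≠ h → (skel C).Adj h v) ∧
  (∀ s : Finset V, (skel C).IsClique (↑s : Set V) → s.card = d + 1 → IsFacet C s)

/-!
A facet `K` of `del C F` that is not a facet of `C` lies in a facet `H ⊇ F` of `C`, and by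
maximality `K = H \ {f}` for some `f ∈ F`. A facet `H'` with `H ∩ H' = H \ {f}` contributes a
vertex `g ∉ H`, and `K ∪ {g}` is a larger face of `del C F`; so the gluing condition forces every
facet of `del C F` to be a facet of `C`. Conversely, when `del C F` is pure, `H \ {f}` extends to a
`d`-face of `del C F`, which is then a facet of `C` adjacent to `H` and avoiding `f`.
-/

theorem exists_isFacet_superset {S : Finset (Finset V)} {A : Finset V} (hA : A ∈ S) :
    ∃ K, IsFacet S K ∧ A ⊆ K := by
  obtain ⟨K, hK, hmax⟩ := (S.filter (A ⊆ ·)).exists_maximal ⟨A, mem_filter.2 ⟨hA, subset_rfl⟩⟩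
  rw [mem_filter] at hK
  exact ⟨K, ⟨hK.1, fun G hG hKG =>
    le_antisymm hKG (hmax (mem_filter.2 ⟨hG, hK.2.trans hKG⟩) hKG)⟩, hK.2⟩

@[simp]
theorem mem_del {C : Finset (Finset V)} {F G : Finset V} : G ∈ del C F ↔ G ∈ C ∧ ¬F ⊆ G :=
  mem_filter

theorem erase_mem_del {C : Finset (Finset V)} {F H : Finset V} {f : V} (hC : IsComplex C)
    (hH : H ∈ C) (hf : f ∈ F) : H.erase f ∈ del C F :=
  mem_del.2 ⟨hC H hH _ (erase_subset f H), fun hFH => notMem_erase f H (hFH hf)⟩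

theorem IsPure.isFacet_of_card_eq {C : Finset (Finset V)} {d : ℕ} {G : Finset V}
    (hP : IsPure C d) (hG : G ∈ C) (hcard : G.card = d + 1) : IsFacet C G := by
  obtain ⟨M, hM, hGM⟩ := exists_isFacet_superset hG
  rwa [eq_of_subset_of_card_le hGM (by rw [hcard, hP M hM])]

theorem inter_eq_erase_iff {H H' : Finset V} {f : V} (hf : f ∈ H) :
    H ∩ H' = H.erase f ↔ H.erase f ⊆ H' ∧ f ∉ H' := by
  constructor
  · intro h
    refine ⟨h ▸ inter_subset_right, fun hf' => notMem_erase f H ?_⟩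
    exact h ▸ mem_inter.2 ⟨hf, hf'⟩
  · rintro ⟨hsub, hf'⟩
    ext x
    by_cases hx : x = f
    · subst hx; simp [hf']
    · simpa [hx] using fun hxH => hsub (mem_erase.2 ⟨hx, hxH⟩)

theorem exists_isFacet_inter_eq_erase_of_isPure_del {C : Finset (Finset V)} {d : ℕ}
    {F H : Finset V} {f : V} (hC : IsComplex C) (hP : IsPure C d) (hdel : IsPure (del C F) d)
    (hf : f ∈ F) (hH : IsFacet C H) (hFH : F ⊆ H) :
    ∃ H', IsFacet C H' ∧ H ∩ H' = H.erase f := by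
  obtain ⟨K, hK, hHK⟩ := exists_isFacet_superset (erase_mem_del hC hH.1 hf)
  obtain ⟨hKC, hFK⟩ := mem_del.1 hK.1
  have hfK : f ∉ K := fun hfK => by
    have hHK' : H ⊆ K := insert_erase (hFH hf) ▸ insert_subset hfK hHK
    exact hFK (hH.2 K hKC hHK' ▸ hFH)
  exact ⟨K, hP.isFacet_of_card_eq hKC (hdel K hK), (inter_eq_erase_iff (hFH hf)).2 ⟨hHK, hfK⟩⟩

theorem IsFacet.exists_eq_erase_of_subset {C : Finset (Finset V)} {F H K : Finset V}
    (hK : IsFacet (del C F) K) (hC : IsComplex C) (hH : H ∈ C) (hKH : K ⊆ H) :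
    ∃ f ∈ F, K = H.erase f := by
  obtain ⟨f, hfF, hfK⟩ := not_subset.1 (mem_del.1 hK.1).2
  refine ⟨f, hfF, hK.2 _ (erase_mem_del hC hH hfF) fun x hx => ?_⟩
  exact mem_erase.2 ⟨fun h => hfK (h ▸ hx), hKH hx⟩

theorem IsFacet.not_isFacet_del_erase {C : Finset (Finset V)} {F H H' : Finset V} {f : V}
    (hC : IsComplex C) (hH : IsFacet C H) (hH' : IsFacet C H') (hf : f ∈ F) (hfH : f ∈ H)
    (hinter : H ∩ H' = H.erase f) : ¬IsFacet (del C F) (H.erase f) := by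
  intro hK
  obtain ⟨hKH', hfH'⟩ := (inter_eq_erase_iff hfH).1 hinter
  obtain ⟨g, hgH', hgH⟩ : ∃ g ∈ H', g ∉ H := by
    by_contra! hH'H
    exact hfH' (hH'.2 H hH.1 hH'H ▸ hfH)
  have hgK : insert g (H.erase f) ∈ del C F := by
    refine mem_del.2 ⟨hC H' hH'.1 _ (insert_subset hgH' hKH'), fun hFK => ?_⟩
    rcases mem_insert.1 (hFK hf) with rfl | hfK
    · exact hgH hfH
    · exact notMem_erase f H hfK
  have hKeq := hK.2 _ hgK (subset_insert g _)
  exact hgH (erase_subset f H (hKeq ▸ mem_insert_self g _))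

theorem gluing_criterion_general (C : Finset (Finset V)) (d : ℕ) (F : Finset V)
    (hC : IsComplex C) (hP : IsPure C d) :
    IsPure (del C F) d ↔
      ∀ f ∈ F, ∀ H : Finset V, IsFacet C H → F ⊆ H →
        ∃ H' : Finset V, IsFacet C H' ∧ H ∩ H' = H.erase f := by
  refine ⟨fun hdel f hf H hH hFH =>
    exists_isFacet_inter_eq_erase_of_isPure_del hC hP hdel hf hH hFH, fun hglue K hK => ?_⟩
  obtain ⟨H, hH, hKH⟩ := exists_isFacet_superset (mem_del.1 hK.1).1
  by_cases hFH : F ⊆ H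
  · obtain ⟨f, hf, rfl⟩ := hK.exists_eq_erase_of_subset hC hH.1 hKH
    obtain ⟨H', hH', hinter⟩ := hglue f hf H hH hFH
    exact absurd hK (hH.not_isFacet_del_erase hC hH' hf (hFH hf) hinter)
  · rw [hK.2 H (mem_del.2 ⟨hH.1, hFH⟩) hKH]
    exact hP H hH

/-- Gluing criterion for shedding faces. -/
theorem gluing_criterion (C : Finset (Finset V)) (d : ℕ) (F : Finset V)
    (hC : IsComplex C) (hP : IsPure C d) (hF : F ∈ C) (hFne : F.Nonempty) :
    IsPure (del C F) d ↔
      ∀ f ∈ F, ∀ H : Finset V, IsFacet C H → F ⊆ H →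
        ∃ H' : Finset V, IsFacet C H' ∧ H ∩ H' = H.erase f :=
  gluing_criterion_general C d F hC hP
end

section
/- Let C be a pure 2-dimensional 1-decomposable simplicial complex, and let full(C) be the pure 2-dimensional complex generated by all 3-cliques of the graph skel(C). Then there is an ordering F_1,...,F_t of the facets of full(C) not in C such that C + ⟨F_1,...,F_i⟩ is 1-decomposable for every 1 ≤ i ≤ t. In particular, full(C) is 1-decomposable. -/
open Finset

variable {V : Type*} [DecidableEq V]

/-!
Adding a minimal nonface `F` of full dimension to a pure `k`-decomposable complex `D` keeps it
`k`-decomposable: a shedding face `G` of `D` still sheds `insert F D`. If `G ⊄ F`, the deletion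
gains `F` and we induct on the deletion; if `G ⊆ F`, the link gains `F \ G`, a minimal nonface
of the link of lower dimension, so the induction runs over all dimensions at once.
The facets of `full(C)` missing from `C` are triangles of `skel C`, whose proper faces lie in `C`;
they are minimal nonfaces of `C` and can be added one at a time in any order.
-/

section

variable {C D T : Finset (Finset V)} {F G S : Finset V} {d k : ℕ}

def IsMinimalNonface (D : Finset (Finset V)) (F : Finset V) : Prop :=
  F ∉ D ∧ ∀ s ⊂ F, s ∈ D

lemma mem_gen : F ∈ gen T ↔ ∃ s ∈ T, F ⊆ s := by
  simp [gen]

lemma isComplex_gen (T : Finset (Finset V)) : IsComplex (gen T) := by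
  intro F hF G hGF
  obtain ⟨s, hs, hFs⟩ := mem_gen.1 hF
  exact mem_gen.2 ⟨s, hs, hGF.trans hFs⟩

lemma isComplex_del (hD : IsComplex D) (G : Finset V) : IsComplex (del D G) := by
  intro F hF S hSF
  rw [del, mem_filter] at hF ⊢
  exact ⟨hD F hF.1 S hSF, fun hGS => hF.2 (hGS.trans hSF)⟩

lemma isComplex_lk (hD : IsComplex D) (G : Finset V) : IsComplex (lk D G) := by
  intro F hF S hSF
  rw [lk, mem_filter] at hF ⊢
  exact ⟨hD F hF.1 S hSF, subset_empty.1 (hF.2.1 ▸ inter_subset_inter_right hSF),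
    hD _ hF.2.2 _ (union_subset_union_left hSF)⟩

lemma IsComplex.union (hD : IsComplex D) (hT : ∀ F ∈ T, ∀ s ⊂ F, s ∈ D) :
    IsComplex (D ∪ T) := by
  intro F hF S hSF
  rcases mem_union.1 hF with hF | hF
  · exact mem_union_left _ (hD F hF S hSF)
  · rcases eq_or_ne S F with rfl | hne
    · exact mem_union_right _ hF
    · exact mem_union_left _ (hT F hF S (ssubset_of_subset_of_ne hSF hne))

lemma union_gen_eq (hT : ∀ F ∈ T, ∀ s ⊂ F, s ∈ D) : D ∪ gen T = D ∪ T := by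
  ext S
  simp only [mem_union, mem_gen]
  constructor
  · rintro (hS | ⟨F, hF, hSF⟩)
    · exact Or.inl hS
    · rcases eq_or_ne S F with rfl | hne
      · exact Or.inr hF
      · exact Or.inl (hT F hF S (ssubset_of_subset_of_ne hSF hne))
  · rintro (hS | hS)
    · exact Or.inl hS
    · exact Or.inr ⟨S, hS, Subset.rfl⟩

lemma exists_isFacet_superset_s8 (hS : S ∈ D) : ∃ F, IsFacet D F ∧ S ⊆ F := by
  obtain ⟨F, hF, hmax⟩ :=
    exists_max_image (D.filter (S ⊆ ·)) card ⟨S, mem_filter.2 ⟨hS, Subset.rfl⟩⟩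
  rw [mem_filter] at hF
  exact ⟨F, ⟨hF.1, fun G hG hFG => eq_of_subset_of_card_le hFG
    (hmax G (mem_filter.2 ⟨hG, hF.2.trans hFG⟩))⟩, hF.2⟩

lemma isPure_iff : IsPure D d ↔ ∀ S ∈ D, ∃ F ∈ D, S ⊆ F ∧ F.card = d + 1 := by
  constructor
  · intro hP S hS
    obtain ⟨F, hF, hSF⟩ := exists_isFacet_superset_s8 hS
    exact ⟨F, hF.1, hSF, hP F hF⟩
  · intro h F hF
    obtain ⟨G, hG, hFG, hGc⟩ := h F hF.1
    rwa [hF.2 G hG hFG]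

lemma IsPure.card_le (hP : IsPure D d) (hS : S ∈ D) : S.card ≤ d + 1 := by
  obtain ⟨F, -, hSF, hF⟩ := isPure_iff.1 hP S hS
  exact hF ▸ card_le_card hSF

lemma IsPure.unique {d' : ℕ} (hP : IsPure D d) (hP' : IsPure D d') (hS : S ∈ D) : d = d' := by
  obtain ⟨F, hF, -⟩ := exists_isFacet_superset_s8 hS
  have := hP F hF
  have := hP' F hF
  omega

lemma isPure_powerset (hS : S.card = d + 1) : IsPure S.powerset d :=
  isPure_iff.2 fun _ hR => ⟨S, mem_powerset_self S, mem_powerset.1 hR, hS⟩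

lemma IsPure.insert (hP : IsPure D d) (hF : F.card = d + 1) : IsPure (insert F D) d := by
  rw [isPure_iff] at hP ⊢
  intro S hS
  rcases mem_insert.1 hS with rfl | hS
  · exact ⟨S, mem_insert_self S D, Subset.rfl, hF⟩
  · obtain ⟨G, hG, hSG, hGc⟩ := hP S hS
    exact ⟨G, mem_insert_of_mem hG, hSG, hGc⟩

lemma IsPure.union (hP : IsPure D d) (hT : ∀ F ∈ T, F.card = d + 1) : IsPure (D ∪ T) d := by
  rw [isPure_iff] at hP ⊢
  intro S hS
  rcases mem_union.1 hS with hS | hS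
  · obtain ⟨G, hG, hSG, hGc⟩ := hP S hS
    exact ⟨G, mem_union_left _ hG, hSG, hGc⟩
  · exact ⟨S, mem_union_right _ hS, Subset.rfl, hT S hS⟩

lemma isPure_lk (hD : IsComplex D) (hP : IsPure D d) (hG : G.card ≤ d) :
    IsPure (lk D G) (d - G.card) := by
  rw [isPure_iff] at hP ⊢
  intro S hS
  rw [lk, mem_filter] at hS
  obtain ⟨F, hF, hSF, hFc⟩ := hP _ hS.2.2
  have hGF : G ⊆ F := subset_union_right.trans hSF
  refine ⟨F \ G, mem_filter.2 ⟨hD F hF _ sdiff_subset, sdiff_inter_self G F, ?_⟩,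
    subset_sdiff.2 ⟨subset_union_left.trans hSF, disjoint_iff_inter_eq_empty.2 hS.2.1⟩, ?_⟩
  · rwa [sdiff_union_of_subset hGF]
  · rw [card_sdiff_of_subset hGF]
    omega

lemma del_insert_of_subset (hGF : G ⊆ F) : del (insert F D) G = del D G := by
  rw [del, del, filter_insert, if_neg (not_not.2 hGF)]

lemma del_insert_of_not_subset (hGF : ¬ G ⊆ F) : del (insert F D) G = insert F (del D G) := by
  rw [del, del, filter_insert, if_pos hGF]

lemma lk_insert_of_subset (hGF : G ⊆ F) (hG : G.Nonempty) (hFG : F \ G ∈ D) :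
    lk (insert F D) G = insert (F \ G) (lk D G) := by
  ext S
  simp only [lk, mem_filter, mem_insert]
  constructor
  · rintro ⟨hS, hSG, hSGF | hSGD⟩
    · left
      rw [← hSGF, union_sdiff_right,
        sdiff_eq_self_of_disjoint (disjoint_iff_inter_eq_empty.2 hSG)]
    · rcases hS with rfl | hS
      · rw [inter_eq_right.2 hGF] at hSG
        exact absurd hSG hG.ne_empty
      · exact Or.inr ⟨hS, hSG, hSGD⟩
  · rintro (rfl | ⟨hS, hSG, hSGD⟩)
    · exact ⟨Or.inr hFG, sdiff_inter_self G F, Or.inl (sdiff_union_of_subset hGF)⟩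
    · exact ⟨Or.inr hS, hSG, Or.inr hSGD⟩

lemma lk_insert_of_not_subset (hGF : ¬ G ⊆ F) (hFG : F ∪ G ∉ D) :
    lk (insert F D) G = lk D G := by
  ext S
  simp only [lk, mem_filter, mem_insert]
  constructor
  · rintro ⟨hS, hSG, hSGF | hSGD⟩
    · exact absurd (hSGF ▸ subset_union_right) hGF
    · rcases hS with rfl | hS
      · exact absurd hSGD hFG
      · exact ⟨hS, hSG, hSGD⟩
  · rintro ⟨hS, hSG, hSGD⟩
    exact ⟨Or.inr hS, hSG, Or.inr hSGD⟩

lemma IsMinimalNonface.del (hF : IsMinimalNonface D F) (hGF : ¬ G ⊆ F) :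
    IsMinimalNonface (del D G) F :=
  ⟨fun h => hF.1 (mem_filter.1 h).1,
    fun s hs => mem_filter.2 ⟨hF.2 s hs, fun hGs => hGF (hGs.trans hs.subset)⟩⟩

lemma IsMinimalNonface.lk (hF : IsMinimalNonface D F) (hGF : G ⊆ F) :
    IsMinimalNonface (lk D G) (F \ G) := by
  refine ⟨fun h => hF.1 ?_, fun s hs => ?_⟩
  · rw [← sdiff_union_of_subset hGF]
    exact (mem_filter.1 h).2.2
  have hsF : s ⊂ F := hs.trans_subset sdiff_subset
  have hsG : Disjoint s G := (subset_sdiff.1 hs.subset).2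
  have hsGF : s ∪ G ⊂ F := by
    refine ssubset_of_subset_of_ne (union_subset hsF.subset hGF) fun h => ?_
    have := card_lt_card hs
    have := card_union_of_disjoint hsG
    have := card_sdiff_add_card_eq_card hGF
    rw [h] at *
    omega
  exact mem_filter.2 ⟨hF.2 s hsF, disjoint_iff_inter_eq_empty.1 hsG, hF.2 _ hsGF⟩

-- The only simplex case of `Decomp.insert_of_isMinimalNonface` that is not contradictory.
lemma Decomp.insert_singleton_powerset_singleton {v w : V} (hvw : v ≠ w) :
    Decomp k (insert {w} ({v} : Finset V).powerset) := by
  have hdel : del (insert {w} ({v} : Finset V).powerset) {v} = ({w} : Finset V).powerset := by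
    ext S
    simp only [del, mem_filter, mem_insert, mem_powerset, subset_singleton_iff,
      singleton_subset_iff]
    constructor
    · rintro ⟨rfl | rfl | rfl, hv⟩ <;> simp_all
    · rintro (rfl | rfl) <;> simp [hvw]
  have hlk : lk (insert {w} ({v} : Finset V).powerset) {v} = (∅ : Finset V).powerset := by
    ext S
    simp only [lk, mem_filter, mem_insert, mem_powerset,
      subset_singleton_iff, subset_empty]
    constructor
    · rintro ⟨rfl | rfl | rfl, hSv, hvS⟩
      · have hv : v ∈ ({w} ∪ {v} : Finset V) := by simp
        have hw : w ∈ ({w} ∪ {v} : Finset V) := by simp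
        rcases hvS with h | h | h <;> rw [h] at hv hw <;> simp_all
      · rfl
      · simp at hSv
    · rintro rfl
      simp
  refine .shed k _ {v} 0 (by simp) (singleton_nonempty v) (by simp)
    ((isPure_powerset (card_singleton v)).insert (card_singleton w)) ?_ ?_ ?_
  · rw [hdel]
    exact isPure_powerset (card_singleton w)
  · rw [hdel]
    exact .simplex k _ ⟨{w}, rfl⟩
  · rw [hlk]
    exact .simplex k _ ⟨∅, rfl⟩

theorem Decomp.insert_of_isMinimalNonface (hD : Decomp k D) (hC : IsComplex D)
    (hP : IsPure D d) (hF : IsMinimalNonface D F) (hFc : F.card = d + 1) :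
    Decomp k (insert F D) := by
  induction hD generalizing d F with
  | simplex D hS =>
    obtain ⟨S, rfl⟩ := hS
    obtain ⟨x, hxF, hxS⟩ := not_subset.1 fun h => hF.1 (mem_powerset.2 h)
    have hFx : F = {x} := by
      by_contra hne
      exact hxS (mem_powerset.1 (hF.2 {x} (ssubset_of_subset_of_ne
        (singleton_subset_iff.2 hxF) (Ne.symm hne))) (mem_singleton_self x))
    have hS1 : S.card = d + 1 :=
      hP S ⟨mem_powerset_self S, fun G hG hSG => hSG.antisymm (mem_powerset.1 hG)⟩
    subst hFx
    obtain ⟨v, rfl⟩ := card_eq_one.1 (hS1.trans (by simpa using hFc.symm))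
    exact Decomp.insert_singleton_powerset_singleton (Ne.symm (by simpa using hxS))
  | shed D G d' hG hGne hGk hPd' hPdel _ _ ihdel ihlk =>
    obtain rfl : d' = d := hPd'.unique hP hG
    have hPF : IsPure (insert F D) d' := hPd'.insert hFc
    by_cases hGF : G ⊆ F
    · have hGF' : G ⊂ F := ssubset_of_subset_of_ne hGF fun h => hF.1 (h ▸ hG)
      have hGd : G.card ≤ d' := by
        have := card_lt_card hGF'
        omega
      refine .shed k _ G d' (mem_insert_of_mem hG) hGne hGk hPF ?_ ?_ ?_
      · rwa [del_insert_of_subset hGF]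
      · rwa [del_insert_of_subset hGF]
      · rw [lk_insert_of_subset hGF hGne (hF.2 _ (sdiff_ssubset hGF hGne))]
        refine ihlk (isComplex_lk hC G) (isPure_lk hC hPd' hGd) (hF.lk hGF) ?_
        rw [card_sdiff_of_subset hGF]
        omega
    · have hFG : F ∪ G ∉ D := fun h => by
        have := card_lt_card (ssubset_of_subset_of_ne subset_union_left
          fun h' => hGF (union_eq_left.1 h'.symm))
        have := hPd'.card_le h
        omega
      refine .shed k _ G d' (mem_insert_of_mem hG) hGne hGk hPF ?_ ?_ ?_
      · rw [del_insert_of_not_subset hGF]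
        exact hPdel.insert hFc
      · rw [del_insert_of_not_subset hGF]
        exact ihdel (isComplex_del hC G) hPdel (hF.del hGF) hFc
      · rwa [lk_insert_of_not_subset hGF hFG]

theorem Decomp.union_of_isMinimalNonface (hD : Decomp k D) (hC : IsComplex D)
    (hP : IsPure D d) (hT : ∀ F ∈ T, IsMinimalNonface D F ∧ F.card = d + 1) :
    Decomp k (D ∪ T) := by
  induction T using Finset.induction_on with
  | empty => rwa [union_empty]
  | @insert F T hFT ih =>
    have hT' : ∀ G ∈ T, IsMinimalNonface D G ∧ G.card = d + 1 :=
      fun G hG => hT G (mem_insert_of_mem hG)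
    obtain ⟨hF, hFc⟩ := hT F (mem_insert_self F T)
    rw [union_insert]
    exact (ih hT').insert_of_isMinimalNonface (hC.union fun G hG => (hT' G hG).1.2)
      (hP.union fun G hG => (hT' G hG).2)
      ⟨by simp [hF.1, hFT], fun s hs => mem_union_left _ (hF.2 s hs)⟩ hFc

lemma eq_union_gen_of_isFacet_iff (hC : IsComplex C) (hD : IsComplex D) (hCD : C ⊆ D)
    (hT : ∀ F, F ∈ T ↔ IsFacet D F ∧ F ∉ C) : D = C ∪ gen T := by
  ext S
  rw [mem_union, mem_gen]
  constructor
  · intro hS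
    obtain ⟨F, hF, hSF⟩ := exists_isFacet_superset_s8 hS
    by_cases hFC : F ∈ C
    · exact Or.inl (hC F hFC S hSF)
    · exact Or.inr ⟨F, (hT F).2 ⟨hF, hFC⟩, hSF⟩
  · rintro (hS | ⟨F, hF, hSF⟩)
    · exact hCD hS
    · exact hD F ((hT F).1 hF).1.1 S hSF

lemma isMinimalNonface_of_isClique_skel (hC : IsComplex C)
    (hF : (skel C).IsClique (F : Set V)) (hFc : F.card = 3) (hFC : F ∉ C) :
    IsMinimalNonface C F := by
  refine ⟨hFC, fun s hs => ?_⟩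
  have := card_lt_card hs
  obtain ⟨e, hse, heF, he⟩ :=
    exists_subsuperset_card_eq hs.subset (n := 2) (by omega) (by omega)
  obtain ⟨x, y, hxy, rfl⟩ := card_eq_two.1 he
  exact hC _ (hF (heF (mem_insert_self x {y})) (heF (mem_insert_of_mem (mem_singleton_self y)))
    hxy).2 s hse

variable [Fintype V] {H : SimpleGraph V}

lemma mem_fullC :
    F ∈ fullC d H ↔ ∃ s : Finset V,
      H.IsClique (s : Set V) ∧ s.card = d + 1 ∧ F ⊆ s := by
  simp [fullC, mem_gen, and_assoc]

lemma isFacet_fullC_iff : IsFacet (fullC d H) F ↔ H.IsClique (F : Set V) ∧ F.card = d + 1 := by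
  constructor
  · rintro ⟨hF, hmax⟩
    obtain ⟨s, hs, hsc, hFs⟩ := mem_fullC.1 hF
    obtain rfl := hmax s (mem_fullC.2 ⟨s, hs, hsc, Subset.rfl⟩) hFs
    exact ⟨hs, hsc⟩
  · rintro ⟨hF, hFc⟩
    refine ⟨mem_fullC.2 ⟨F, hF, hFc, Subset.rfl⟩, fun G hG hFG => ?_⟩
    obtain ⟨s, -, hsc, hGs⟩ := mem_fullC.1 hG
    obtain rfl : F = s := eq_of_subset_of_card_le (hFG.trans hGs) (by omega)
    exact hFG.antisymm hGs

lemma subset_fullC_skel (hC : IsComplex C) (hP : IsPure C d) : C ⊆ fullC d (skel C) := by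
  intro S hS
  obtain ⟨F, hF, hSF, hFc⟩ := isPure_iff.1 hP S hS
  exact mem_fullC.2 ⟨F, fun x hx y hy hxy =>
    ⟨hxy, hC F hF _ (insert_subset (mem_coe.1 hx) (singleton_subset_iff.2 (mem_coe.1 hy)))⟩,
    hFc, hSF⟩

end

/-- A pure 2-dimensional 1-decomposable complex can be extended facet by facet to
`full(C)`, staying 1-decomposable; in particular `full(C)` is 1-decomposable. -/
theorem two_dim_to_full [Fintype V] (C : Finset (Finset V))
    (hC : IsComplex C) (hP : IsPure C 2) (hD : Decomp 1 C) :
    (∃ L : List (Finset V), L.Nodup ∧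
      (∀ F : Finset V, F ∈ L ↔ (IsFacet (fullC 2 (skel C)) F ∧ F ∉ C)) ∧
      ∀ i : ℕ, i ≤ L.length → Decomp 1 (C ∪ gen (L.take i).toFinset)) ∧
    Decomp 1 (fullC 2 (skel C)) := by
  classical
  obtain ⟨L, hLnd, hL⟩ : ∃ L : List (Finset V), L.Nodup ∧
      ∀ F, F ∈ L ↔ IsFacet (fullC 2 (skel C)) F ∧ F ∉ C :=
    ⟨(univ.filter fun F => IsFacet (fullC 2 (skel C)) F ∧ F ∉ C).toList, nodup_toList _,
      fun F => by simp⟩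
  have hnew : ∀ F ∈ L, IsMinimalNonface C F ∧ F.card = 3 := fun F hF => by
    obtain ⟨hFfull, hFC⟩ := (hL F).1 hF
    obtain ⟨hcl, hFc⟩ := isFacet_fullC_iff.1 hFfull
    exact ⟨isMinimalNonface_of_isClique_skel hC hcl hFc hFC, hFc⟩
  have hdecomp : ∀ i, Decomp 1 (C ∪ gen (L.take i).toFinset) := fun i => by
    have hnew_i : ∀ F ∈ (L.take i).toFinset, IsMinimalNonface C F ∧ F.card = 3 :=
      fun F hF => hnew F (List.mem_of_mem_take (List.mem_toFinset.1 hF))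
    rw [union_gen_eq fun F hF => (hnew_i F hF).1.2]
    exact hD.union_of_isMinimalNonface hC hP hnew_i
  refine ⟨⟨L, hLnd, hL, fun i _ => hdecomp i⟩, ?_⟩
  rw [eq_union_gen_of_isFacet_iff (D := fullC 2 (skel C)) (T := L.toFinset) hC (isComplex_gen _)
    (subset_fullC_skel hC hP) (by simpa using hL)]
  simpa using hdecomp L.length
end
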